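/- Single-element accuracy of the large-domain estimator: let n, B, b be positive integers with b ≥ 2, 0 < ε ≤ 3, 0 < δ < 1, β ∈ (0,1], and set ρ = (32·ln(2/δ)/ε²)·(b/n). Let p_col be a real number with 0 ≤ p_col < 1/b, let g be an integer with 0 ≤ g ≤ n, and let X = g + Y₁ + Y₂ where Y₁ ~ Binomial(n − g, p_col) and Y₂ ~ Binomial(n, ρ/b) are independent (ρ/b ≤ 1 is assumed). Define ĝ = (X − n·ρ/b − n·p_col)/(1 − p_col). Then Pr[ |ĝ − g| > 2·max{ 3·ln(2B/β), √( 3·ln(2B/β) · ( n/b + 32·ln(2/δ)/ε² ) ) } ] < β/B. -/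

import Mathlib

/-!
Centring shows `ĝ - g = (X - 𝔼X) / (1 - p_col)` with `1 - p_col ≥ 1/2`, so it suffices to bound
`Pr[|X - 𝔼X| ≥ t]` for `t = max (3L) √(3L(n/b + 32 ln(2/δ)/ε²))`, `L = ln(2B/β)`. Since
`1 + x ≤ eˣ`, the moment generating function of `X` is dominated by that of a Poisson variable of
mean `m = 𝔼X - g ≤ n/b + 32 ln(2/δ)/ε²`. Chernoff's bound then gives both tails at most
`exp (m (eˢ - 1 - s) - s t)` (the lower one because `s ≤ sinh s`), and for `t ≥ 3L`, `t² ≥ 3Lm`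
a suitable `s ≥ 0` makes this exponent smaller than `-L`, so the probability is below
`2 e^{-L} = β / B`.
-/

open scoped ENNReal

/-- A `{0,1}`-valued Bernoulli random variable with success probability `q`, as a `PMF ℕ`. -/
noncomputable def bernoulliNat (q : ℝ≥0∞) (h : q ≤ 1) : PMF ℕ :=
  (PMF.ofFintype (fun b => cond b q (1 - q)) (by simp [h])).map (fun b => if b then 1 else 0)

/-- The `Binomial(N, q)` distribution, built as a sum of `N` independent Bernoulli's. -/
noncomputable def binomialNat (q : ℝ≥0∞) (h : q ≤ 1) : ℕ → PMF ℕ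
  | 0 => PMF.pure 0
  | N + 1 => (bernoulliNat q h).bind fun a => (binomialNat q h N).map (a + ·)

open Real

lemma ofReal_exp_mul_ofReal_exp (a b : ℝ) :
    ENNReal.ofReal (exp a) * ENNReal.ofReal (exp b) = ENNReal.ofReal (exp (a + b)) := by
  rw [← ENNReal.ofReal_mul (exp_nonneg _), exp_add]

lemma exp_neg_sub_one_add_le {s : ℝ} (hs : 0 ≤ s) : exp (-s) - 1 + s ≤ exp s - 1 - s := by
  have := self_le_sinh_iff.mpr hs
  rw [sinh_eq] at this
  linarith

lemma exp_le_one_add_add_sq {x : ℝ} (hx₀ : 0 ≤ x) (hx₁ : x ≤ 9 / 10) :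
    exp x ≤ 1 + x + 7 / 10 * x ^ 2 := by
  have := exp_bound' hx₀ (by linarith) (n := 3) (by norm_num)
  norm_num [Finset.sum_range_succ, Nat.factorial] at this
  nlinarith

lemma exists_chernoff_exponent_lt {m t L : ℝ} (hm : 0 ≤ m) (hL : 0 < L) (htL : 3 * L ≤ t)
    (htm : 3 * L * m ≤ t ^ 2) : ∃ s, 0 ≤ s ∧ m * (exp s - 1 - s) - s * t < -L := by
  rcases le_or_gt t m with htm' | hmt
  · have ht : 0 ≤ t := by linarith
    have hm : 0 < m := by linarith
    -- `s = 5t/(7m)` nearly minimises the quadratic majorant `m * (7/10) s² - s t`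
    refine ⟨5 * t / (7 * m), by positivity, ?_⟩
    set s := 5 * t / (7 * m) with hs
    have hsm : s * m = 5 / 7 * t := by rw [hs]; field_simp
    have hs₁ : s ≤ 9 / 10 := by rw [hs, div_le_iff₀ (by positivity)]; linarith
    have hst : 15 / 7 * L ≤ s * t := le_of_mul_le_mul_right (by nlinarith) hm
    have := exp_le_one_add_add_sq (by positivity) hs₁
    nlinarith
  · refine ⟨log 2, log_nonneg (by norm_num), ?_⟩
    rw [exp_log two_pos]
    nlinarith [log_two_gt_d9]

namespace PMF

/-- The moment generating function, valued in `ℝ≥0∞` so that it needs no summability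
hypotheses. -/
noncomputable def mgf (P : PMF ℕ) (s : ℝ) : ℝ≥0∞ :=
  ∑' k, P k * ENNReal.ofReal (exp (s * k))

section mgf

variable {α : Type*} (s : ℝ)

lemma mgf_bind (P : PMF α) (f : α → PMF ℕ) : (P.bind f).mgf s = ∑' a, P a * (f a).mgf s := by
  simp only [mgf, bind_apply, ← ENNReal.tsum_mul_right, ← ENNReal.tsum_mul_left, mul_assoc]
  exact ENNReal.tsum_comm

lemma mgf_pure (a : ℕ) : (pure a).mgf s = ENNReal.ofReal (exp (s * a)) := by
  rw [mgf, tsum_eq_single a fun k hk => by simp [pure_apply, hk]]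
  simp

lemma mgf_map (P : PMF α) (f : α → ℕ) :
    (P.map f).mgf s = ∑' a, P a * ENNReal.ofReal (exp (s * f a)) := by
  simp only [map, mgf_bind, Function.comp_apply, mgf_pure]

lemma mgf_map_add_left (P : PMF ℕ) (c : ℕ) :
    (P.map (c + ·)).mgf s = ENNReal.ofReal (exp (s * c)) * P.mgf s := by
  rw [mgf_map, mgf, ← ENNReal.tsum_mul_left]
  refine tsum_congr fun k => ?_
  rw [Nat.cast_add, mul_add, ← ofReal_exp_mul_ofReal_exp, mul_left_comm]

lemma mgf_bind_map_add (P Q : PMF ℕ) :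
    (P.bind fun a => Q.map (a + ·)).mgf s = P.mgf s * Q.mgf s := by
  simp only [mgf_bind, mgf_map_add_left, ← mul_assoc, ENNReal.tsum_mul_right]
  rfl

lemma mgf_bind_map_add_add (P Q : PMF ℕ) (c : ℕ) :
    (P.bind fun a => Q.map (c + a + ·)).mgf s =
      ENNReal.ofReal (exp (s * c)) * P.mgf s * Q.mgf s := by
  rw [← mgf_map_add_left, ← mgf_bind_map_add, bind_map]
  rfl

/-- For `s < 0` this bounds the lower tail `{X ≤ c}`. -/
lemma toOuterMeasure_le_exp_mul_mgf (P : PMF ℕ) (c : ℝ) :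
    P.toOuterMeasure {X | s * c ≤ s * X} ≤ ENNReal.ofReal (exp (-(s * c))) * P.mgf s := by
  rw [toOuterMeasure_apply, mgf, ← ENNReal.tsum_mul_left]
  refine ENNReal.tsum_le_tsum fun k => ?_
  by_cases hk : k ∈ {X : ℕ | s * c ≤ s * X}
  · rw [Set.indicator_of_mem hk, mul_left_comm, ofReal_exp_mul_ofReal_exp]
    refine le_mul_of_one_le_right' (ENNReal.one_le_ofReal.mpr (one_le_exp (by linarith [hk.out])))
  · rw [Set.indicator_of_notMem hk]
    exact zero_le

end mgf

lemma toOuterMeasure_abs_sub_ge_le {P : PMF ℕ} {μ m : ℝ} (hm : 0 ≤ m)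
    (hP : ∀ s, P.mgf s ≤ ENNReal.ofReal (exp (s * μ + m * (exp s - 1 - s))))
    {s : ℝ} (hs : 0 ≤ s) (t : ℝ) :
    P.toOuterMeasure {X | t ≤ |(X : ℝ) - μ|} ≤
      2 * ENNReal.ofReal (exp (m * (exp s - 1 - s) - s * t)) := by
  have chernoff (σ c : ℝ) : P.toOuterMeasure {X | σ * c ≤ σ * X} ≤
      ENNReal.ofReal (exp (σ * (μ - c) + m * (exp σ - 1 - σ))) := by
    refine (P.toOuterMeasure_le_exp_mul_mgf σ c).trans ?_
    grw [hP σ, ofReal_exp_mul_ofReal_exp]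
    exact le_of_eq (by ring_nf)
  have hsplit : {X : ℕ | t ≤ |(X : ℝ) - μ|} ⊆
      {X | s * (μ + t) ≤ s * X} ∪ {X | -s * (μ - t) ≤ -s * X} := by
    intro X hX
    rcases le_abs'.mp hX.out with h | h
    · exact Or.inr (show -s * (μ - t) ≤ -s * X by nlinarith)
    · exact Or.inl (show s * (μ + t) ≤ s * X by nlinarith)
  calc _ ≤ P.toOuterMeasure {X | s * (μ + t) ≤ s * X} +
        P.toOuterMeasure {X | -s * (μ - t) ≤ -s * X} :=
        (P.toOuterMeasure.mono hsplit).trans (MeasureTheory.measure_union_le _ _)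
    _ ≤ ENNReal.ofReal (exp (m * (exp s - 1 - s) - s * t)) +
        ENNReal.ofReal (exp (m * (exp s - 1 - s) - s * t)) := by
        gcongr
        · exact (chernoff s _).trans (le_of_eq (by ring_nf))
        · refine (chernoff (-s) _).trans (ENNReal.ofReal_le_ofReal (exp_le_exp.mpr ?_))
          nlinarith [exp_neg_sub_one_add_le hs]
    _ = _ := (two_mul _).symm

end PMF

open PMF

lemma mgf_bernoulliNat_le {q : ℝ} (hq : 0 ≤ q) (h : ENNReal.ofReal q ≤ 1) (s : ℝ) :
    (bernoulliNat (ENNReal.ofReal q) h).mgf s ≤ ENNReal.ofReal (exp (q * (exp s - 1))) := by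
  have hq₁ : q ≤ 1 := ENNReal.ofReal_le_one.mp h
  rw [bernoulliNat, mgf_map, tsum_bool]
  simp only [ofFintype_apply, cond_false, cond_true, Bool.false_eq_true, if_false, if_true,
    Nat.cast_zero, Nat.cast_one, mul_zero, mul_one, exp_zero, ENNReal.ofReal_one]
  rw [← ENNReal.ofReal_one, ← ENNReal.ofReal_sub _ hq, ← ENNReal.ofReal_mul hq,
    ← ENNReal.ofReal_add (by linarith) (by positivity)]
  exact ENNReal.ofReal_le_ofReal (by linarith [add_one_le_exp (q * (exp s - 1))])

lemma mgf_binomialNat_le {q : ℝ} (hq : 0 ≤ q) (h : ENNReal.ofReal q ≤ 1) (N : ℕ) (s : ℝ) :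
    (binomialNat (ENNReal.ofReal q) h N).mgf s ≤
      ENNReal.ofReal (exp (N * q * (exp s - 1))) := by
  induction N with
  | zero => simp [binomialNat, mgf_pure]
  | succ N ih =>
    rw [binomialNat, mgf_bind_map_add]
    calc _ ≤ ENNReal.ofReal (exp (q * (exp s - 1))) * ENNReal.ofReal (exp (N * q * (exp s - 1))) :=
          mul_le_mul' (mgf_bernoulliNat_le hq h s) ih
      _ = _ := by
          rw [ofReal_exp_mul_ofReal_exp]
          push_cast
          ring_nf

lemma mgf_binomialNat_bind_map_le {p₁ p₂ : ℝ} (hp₁ : 0 ≤ p₁) (hp₂ : 0 ≤ p₂)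
    (h₁ : ENNReal.ofReal p₁ ≤ 1) (h₂ : ENNReal.ofReal p₂ ≤ 1) (N₁ N₂ c : ℕ) (s : ℝ) :
    ((binomialNat (ENNReal.ofReal p₁) h₁ N₁).bind fun y₁ =>
        (binomialNat (ENNReal.ofReal p₂) h₂ N₂).map fun y₂ => c + y₁ + y₂).mgf s ≤
      ENNReal.ofReal (exp (s * (c + (N₁ * p₁ + N₂ * p₂)) +
        (N₁ * p₁ + N₂ * p₂) * (exp s - 1 - s))) := by
  rw [mgf_bind_map_add_add]
  grw [mgf_binomialNat_le hp₁, mgf_binomialNat_le hp₂, ofReal_exp_mul_ofReal_exp,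
    ofReal_exp_mul_ofReal_exp]
  exact le_of_eq (by ring_nf)

lemma abs_estimator_sub_gt_subset {n g : ℕ} (hg : g ≤ n) {q p t : ℝ} (hp : p ≤ 1 / 2)
    (ht : 0 ≤ t) :
    {X : ℕ | |((X : ℝ) - n * q - n * p) / (1 - p) - g| > 2 * t} ⊆
      {X | t ≤ |(X : ℝ) - (g + ((n - g : ℕ) * p + n * q))|} := by
  intro X hX
  have hp' : 0 < 1 - p := by linarith
  have hcentre : ((X : ℝ) - n * q - n * p) / (1 - p) - g =
      ((X : ℝ) - (g + ((n - g : ℕ) * p + n * q))) / (1 - p) := by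
    rw [Nat.cast_sub hg]
    field_simp
    ring
  have hX := hX.out
  rw [hcentre, abs_div, abs_of_pos hp', gt_iff_lt, lt_div_iff₀ hp'] at hX
  show t ≤ _
  nlinarith

lemma three_mul_mul_le_sq_max {L m V : ℝ} (hL : 0 ≤ L) (hm : 0 ≤ m) (hmV : m ≤ V) :
    3 * L * m ≤ max (3 * L) √(3 * L * V) ^ 2 := by
  calc 3 * L * m ≤ √(3 * L * V) ^ 2 := by rw [sq_sqrt (by have := hm.trans hmV; positivity)]; gcongr
    _ ≤ _ := by gcongr; exact le_max_right _ _

lemma estimator_mean_le {n b : ℕ} (hn : 0 < n) (hb : 0 < b) (g : ℕ) {p ρ C : ℝ}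
    (hp₀ : 0 ≤ p) (hp : p ≤ 1 / b) (hρ : ρ = C * (b / n)) :
    ((n - g : ℕ) : ℝ) * p + n * (ρ / b) ≤ n / b + C := by
  have hmean : n * (ρ / b) = C := by
    rw [hρ]
    field_simp
  have : ((n - g : ℕ) : ℝ) * p ≤ n / b := by
    calc _ ≤ (n : ℝ) * (1 / b) := by gcongr; exact_mod_cast n.sub_le g
      _ = n / b := mul_one_div _ _
  linarith

theorem stmt16 (n B b : ℕ) (hn : 0 < n) (hB : 0 < B) (hb2 : 2 ≤ b)
    (ε δ β : ℝ) (hβ0 : 0 < β) (hβ1 : β ≤ 1)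
    (ρ : ℝ) (hρ : ρ = 32 * Real.log (2 / δ) / ε ^ 2 * ((b : ℝ) / n))
    (pcol : ℝ) (hpcol0 : 0 ≤ pcol) (hpcol : pcol < 1 / b)
    (g : ℕ) (hg : g ≤ n)
    (hρb0 : 0 ≤ ρ / b) (hρb1 : ρ / b ≤ 1) :
    (((binomialNat (ENNReal.ofReal pcol)
          (ENNReal.ofReal_le_one.mpr
            (hpcol.le.trans (by
              rw [div_le_one (by positivity)]
              exact_mod_cast Nat.one_le_iff_ne_zero.mpr (by omega)))) (n - g)).bind
        (fun y₁ =>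
          (binomialNat (ENNReal.ofReal (ρ / b)) (ENNReal.ofReal_le_one.mpr hρb1) n).map
            (fun y₂ => g + y₁ + y₂))).toOuterMeasure
      {X | |(((X : ℝ) - n * (ρ / b) - n * pcol) / (1 - pcol)) - (g : ℝ)| >
        2 * max (3 * Real.log (2 * B / β))
          (Real.sqrt (3 * Real.log (2 * B / β) *
            ((n : ℝ) / b + 32 * Real.log (2 / δ) / ε ^ 2)))}).toReal < β / B := by
  set L := log (2 * B / β)
  set t := max (3 * L) √(3 * L * (n / b + 32 * log (2 / δ) / ε ^ 2))
  set m := ((n - g : ℕ) : ℝ) * pcol + n * (ρ / b)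
  have hb : (2 : ℝ) ≤ b := by exact_mod_cast hb2
  have hpcol₂ : pcol ≤ 1 / 2 := hpcol.le.trans (by gcongr)
  have hL : 0 < L := by
    have : (1 : ℝ) ≤ B := by exact_mod_cast hB
    exact log_pos ((one_lt_div hβ0).mpr (by linarith))
  have hm : 0 ≤ m := by positivity
  have hmV : m ≤ n / b + 32 * log (2 / δ) / ε ^ 2 :=
    estimator_mean_le hn (by omega) g hpcol0 hpcol.le hρ
  obtain ⟨s, hs, hexp⟩ := exists_chernoff_exponent_lt hm hL (le_max_left _ _)
    (three_mul_mul_le_sq_max hL.le hm hmV)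
  have htail := toOuterMeasure_abs_sub_ge_le hm
    (mgf_binomialNat_bind_map_le hpcol0 hρb0 (ENNReal.ofReal_le_one.mpr (by linarith))
      (ENNReal.ofReal_le_one.mpr hρb1) (n - g) n g) hs t
  calc _ ≤ (2 * ENNReal.ofReal (exp (m * (exp s - 1 - s) - s * t))).toReal :=
        ENNReal.toReal_mono (by finiteness)
          ((MeasureTheory.measure_mono (abs_estimator_sub_gt_subset hg
            hpcol₂ (by positivity))).trans htail)
    _ < 2 * exp (-L) := by
        rw [ENNReal.toReal_mul, ENNReal.toReal_ofReal (exp_nonneg _)]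
        simp only [ENNReal.toReal_ofNat]
        gcongr
    _ = β / B := by
        rw [exp_neg, exp_log (by positivity)]
        field_simp
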